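/- For all k ≥ 0 and all n with 0 ≤ n ≤ 2^(2k) − 1, s(n + 2^(2k+1)) = s(n) + 2^(k+1); and for all n with 2^(2k) ≤ n ≤ 2^(2k+1) − 1, s(n + 2^(2k+1)) = −s(n) + 2^(k+2). -/

import Mathlib

def rs : ℕ → ℤ
  | 0 => 1
  | (n+1) =>
    if (n+1) % 2 = 0 then rs ((n+1)/2)
    else (-1)^((n+1)/2) * rs ((n+1)/2)
decreasing_by all_goals exact Nat.div_lt_self (Nat.succ_pos n) (by norm_num)

def s (n : ℕ) : ℤ := ∑ i ∈ Finset.range (n+1), rs i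

def t (n : ℕ) : ℤ := ∑ i ∈ Finset.range (n+1), (-1)^i * rs i

/-!
The Rudin–Shapiro sequence is self-similar: if `rs (a + j) = ε * rs (b + j)` for `j < N` and
`a ≡ b [MOD 2]`, the same relation holds between `2 * a + j` and `2 * b + j` for `j < 2 * N`.
Starting from `rs 2 = rs 0` and `rs 3 = -rs 1`, the block `[2^(m+1), 2^(m+1) + 2^m)` copies
`[0, 2^m)` and `[3 * 2^m, 2^(m+2))` is the negative of `[2^m, 2^(m+1))`. Hence the partial sums
satisfy `rsSum (2^(m+2)) = 2 * rsSum (2^m)`, so `rsSum (2^(2k)) = 2^k` and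
`rsSum (2^(2k+1)) = 2^(k+1)`; splitting the sum at `2^(2k+1)` and at `3 * 2^(2k)` gives both identities.
-/

open Finset

lemma rs_two_mul (n : ℕ) : rs (2 * n) = rs n := by
  cases n with
  | zero => rfl
  | succ n =>
    rw [show 2 * (n + 1) = (2 * n + 1) + 1 by ring, rs]
    simp [show (2 * n + 1 + 1) % 2 = 0 by omega, show (2 * n + 1 + 1) / 2 = n + 1 by omega]

lemma rs_two_mul_add_one (n : ℕ) : rs (2 * n + 1) = (-1) ^ n * rs n := by
  cases n with
  | zero => simp [rs]
  | succ n =>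
    rw [show 2 * (n + 1) + 1 = (2 * n + 2) + 1 by ring, rs]
    simp [show (2 * n + 2 + 1) % 2 = 1 by omega, show (2 * n + 2 + 1) / 2 = n + 1 by omega]

lemma rs_two_mul_add_eq_of_forall_lt {a b N : ℕ} {ε : ℤ} (hab : a ≡ b [MOD 2])
    (h : ∀ j < N, rs (a + j) = ε * rs (b + j)) {n : ℕ} (hn : n < 2 * N) :
    rs (2 * a + n) = ε * rs (2 * b + n) := by
  obtain ⟨j, rfl | rfl⟩ := Nat.even_or_odd' n
  · rw [← mul_add, ← mul_add, rs_two_mul, rs_two_mul, h j (by omega)]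
  · have hsign : (-1 : ℤ) ^ (a + j) = (-1) ^ (b + j) := by
      rw [neg_one_pow_eq_pow_mod_two, neg_one_pow_eq_pow_mod_two (b + j), hab.add_right j]
    rw [← add_assoc, ← add_assoc, ← mul_add, ← mul_add, rs_two_mul_add_one, rs_two_mul_add_one,
      h j (by omega), hsign]
    ring

lemma rs_two_pow_mul_add_eq {a b : ℕ} {ε : ℤ} (hab : a ≡ b [MOD 2]) (h : rs a = ε * rs b)
    (m : ℕ) {n : ℕ} (hn : n < 2 ^ m) : rs (2 ^ m * a + n) = ε * rs (2 ^ m * b + n) := by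
  induction m generalizing n with
  | zero => simpa [show n = 0 by omega] using h
  | succ m ih =>
    rw [pow_succ', mul_assoc, mul_assoc]
    rw [pow_succ'] at hn
    exact rs_two_mul_add_eq_of_forall_lt (hab.mul_left _) (fun j hj => ih hj) hn

lemma rs_two_pow_succ_add {m n : ℕ} (hn : n < 2 ^ m) : rs (2 ^ (m + 1) + n) = rs n := by
  have h := rs_two_pow_mul_add_eq (a := 2) (b := 0) (ε := 1) rfl (by simp [rs]) m hn
  simpa [pow_succ] using h

lemma rs_three_mul_two_pow_add {m n : ℕ} (hn : n < 2 ^ m) :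
    rs (3 * 2 ^ m + n) = -rs (2 ^ m + n) := by
  have h := rs_two_pow_mul_add_eq (a := 3) (b := 1) (ε := -1) rfl
    (by simp [rs_two_mul_add_one 1, rs_two_mul_add_one 0, rs]) m hn
  simpa [mul_comm] using h

def rsSum (n : ℕ) : ℤ := ∑ i ∈ range n, rs i

lemma s_eq_rsSum (n : ℕ) : s n = rsSum (n + 1) := rfl

lemma rsSum_add (a n : ℕ) : rsSum (a + n) = rsSum a + ∑ i ∈ range n, rs (a + i) :=
  sum_range_add rs a n

lemma rsSum_two_pow_succ_add {m n : ℕ} (hn : n ≤ 2 ^ m) :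
    rsSum (2 ^ (m + 1) + n) = rsSum (2 ^ (m + 1)) + rsSum n := by
  rw [rsSum_add, rsSum]
  exact congrArg _ (sum_congr rfl fun i hi => rs_two_pow_succ_add (by simp at hi; omega))

lemma rsSum_three_mul_two_pow_add {m n : ℕ} (hn : n ≤ 2 ^ m) :
    rsSum (3 * 2 ^ m + n) = rsSum (2 ^ (m + 1)) + 2 * rsSum (2 ^ m) - rsSum (2 ^ m + n) := by
  have hhead : rsSum (3 * 2 ^ m) = rsSum (2 ^ (m + 1)) + rsSum (2 ^ m) := by
    rw [← rsSum_two_pow_succ_add le_rfl]; ring_nf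
  have htail : ∑ i ∈ range n, rs (3 * 2 ^ m + i) = -∑ i ∈ range n, rs (2 ^ m + i) := by
    rw [← sum_neg_distrib]
    exact sum_congr rfl fun i hi => rs_three_mul_two_pow_add (by simp at hi; omega)
  rw [rsSum_add, hhead, htail, rsSum_add (2 ^ m)]
  ring

lemma rsSum_two_pow_add_two (m : ℕ) : rsSum (2 ^ (m + 2)) = 2 * rsSum (2 ^ m) := by
  have h := rsSum_three_mul_two_pow_add (m := m) le_rfl
  rw [show 3 * 2 ^ m + 2 ^ m = 2 ^ (m + 2) by ring, show 2 ^ m + 2 ^ m = 2 ^ (m + 1) by ring] at h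
  linarith

lemma rsSum_two_pow_two_mul (k : ℕ) : rsSum (2 ^ (2 * k)) = 2 ^ k := by
  induction k with
  | zero => simp [rsSum, rs]
  | succ k ih => rw [show 2 * (k + 1) = 2 * k + 2 by ring, rsSum_two_pow_add_two, ih, pow_succ']

lemma rsSum_two_pow_two_mul_add_one (k : ℕ) : rsSum (2 ^ (2 * k + 1)) = 2 ^ (k + 1) := by
  induction k with
  | zero => simp [rsSum, sum_range_succ, rs_two_mul_add_one 0, rs]
  | succ k ih =>
    rw [show 2 * (k + 1) + 1 = 2 * k + 1 + 2 by ring, rsSum_two_pow_add_two, ih, pow_succ' _ (k + 1)]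

theorem stmt9 : ∀ k : ℕ,
    (∀ n : ℕ, n ≤ 2^(2*k) - 1 → s (n + 2^(2*k+1)) = s n + 2^(k+1)) ∧
    (∀ n : ℕ, 2^(2*k) ≤ n → n ≤ 2^(2*k+1) - 1 → s (n + 2^(2*k+1)) = -s n + 2^(k+2)) := by
  intro k
  have hpos : 0 < 2 ^ (2 * k) := Nat.two_pow_pos _
  have hdouble : 2 ^ (2 * k + 1) = 2 * 2 ^ (2 * k) := pow_succ' 2 (2 * k)
  constructor
  · intro n hn
    rw [s_eq_rsSum, s_eq_rsSum, show n + 2 ^ (2 * k + 1) + 1 = 2 ^ (2 * k + 1) + (n + 1) by ring,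
      rsSum_two_pow_succ_add (by omega), rsSum_two_pow_two_mul_add_one, add_comm]
  · intro n hlo hhi
    obtain ⟨j, hj⟩ : ∃ j, n + 1 = 2 ^ (2 * k) + j := ⟨n + 1 - 2 ^ (2 * k), by omega⟩
    rw [s_eq_rsSum, s_eq_rsSum, hj, show n + 2 ^ (2 * k + 1) + 1 = 3 * 2 ^ (2 * k) + j by omega,
      rsSum_three_mul_two_pow_add (by omega), rsSum_two_pow_two_mul_add_one,
      rsSum_two_pow_two_mul]
    ring
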